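/- Let X ∈ ℝ^{d×N}, T ⊆ [N], and suppose the Hausdorff distance between conv(X_T) and conv(X) is at most opt(X)·ε, where X_T is the submatrix of columns indexed by T and conv(X_T) ⊆ conv(X). Then min over column stochastic A ∈ ℝ^{|T|×k}, B ∈ ℝ^{k×N} of (1/√N)‖X − X_T A B‖_F is at most (1+ε)·opt(X). -/

import Mathlib

open Matrix Metric

def ColStoch {m n : Type*} [Fintype m] [Fintype n] (M : Matrix m n ℝ) : Prop :=
  (∀ i j, 0 ≤ M i j) ∧ ∀ j, ∑ i, M i j = 1

noncomputable def frob {m n : Type*} [Fintype m] [Fintype n] (M : Matrix m n ℝ) : ℝ :=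
  Real.sqrt (∑ i, ∑ j, (M i j) ^ 2)

noncomputable def opt {d N : ℕ} (k : ℕ) (X : Matrix (Fin d) (Fin N) ℝ) : ℝ :=
  sInf {c | ∃ A : Matrix (Fin N) (Fin k) ℝ, ∃ B : Matrix (Fin k) (Fin N) ℝ,
    ColStoch A ∧ ColStoch B ∧ c = (1 / Real.sqrt N) * frob (X - X * A * B)}

/-- The columns of a matrix, as points of Euclidean space. -/
def cols {d : ℕ} {n : Type*} [Fintype n] (M : Matrix (Fin d) n ℝ) :
    Set (EuclideanSpace ℝ (Fin d)) :=
  Set.range fun j => (WithLp.toLp 2 (fun a => M a j) : EuclideanSpace ℝ (Fin d))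

/-!
Take an optimal pair `(A, B)`. Every archetype, i.e. every column of `X A`, lies in `conv X`,
so it is within the Hausdorff distance `h` of some point of `conv X_T`, which we write as a
column of `X_T A'` with `A'` column stochastic. Each column of `(X A - X_T A') B` is a convex
combination of columns of norm at most `h`, so replacing `X A` by `X_T A'` increases the
Frobenius error by at most `√N h ≤ √N ε opt(X)`.
-/

open Set

lemma Metric.exists_mem_dist_le_hausdorffDist {α : Type*} [PseudoMetricSpace α] {s t : Set α}
    {x : α} (hx : x ∈ s) (ht : IsCompact t) (hne : t.Nonempty)
    (hfin : hausdorffEDist s t ≠ ⊤) : ∃ y ∈ t, dist x y ≤ hausdorffDist s t := by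
  obtain ⟨y, hy, hxy⟩ := ht.exists_infDist_eq_dist hne x
  exact ⟨y, hy, hxy ▸ infDist_le_hausdorffDist_of_mem hx hfin⟩

lemma mem_convexHull_range_iff_exists_stdSimplex {R E ι : Type*} [Field R] [LinearOrder R]
    [IsStrictOrderedRing R] [AddCommGroup E] [Module R E] [Fintype ι] {v : ι → E} {x : E} :
    x ∈ convexHull R (range v) ↔ ∃ w ∈ stdSimplex R ι, ∑ i, w i • v i = x := by
  classical
  have hv : range v =
      Fintype.linearCombination R v '' range fun i j => if i = j then 1 else 0 := by
    rw [← range_comp]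
    congr 1
    funext i
    simp [Fintype.linearCombination_apply]
  rw [hv, ← LinearMap.image_convexHull, convexHull_basis_eq_stdSimplex]
  simp [Fintype.linearCombination_apply]

section Columns

variable {d : ℕ} {m n p : Type*}

def columnVec (M : Matrix (Fin d) n ℝ) (j : n) : EuclideanSpace ℝ (Fin d) :=
  WithLp.toLp 2 fun a => M a j

lemma cols_eq_range_columnVec [Fintype n] (M : Matrix (Fin d) n ℝ) :
    cols M = range (columnVec M) := rfl

lemma columnVec_sub (M M' : Matrix (Fin d) n ℝ) (j : n) :
    columnVec (M - M') j = columnVec M j - columnVec M' j := rfl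

lemma columnVec_mul [Fintype m] (M : Matrix (Fin d) m ℝ) (A : Matrix m p ℝ) (j : p) :
    columnVec (M * A) j = ∑ i, A i j • columnVec M i := by
  ext a
  simp [columnVec, Matrix.mul_apply, mul_comm]

lemma colStoch_iff_forall_mem_stdSimplex [Fintype m] [Fintype p] {M : Matrix m p ℝ} :
    ColStoch M ↔ ∀ j, (fun i => M i j) ∈ stdSimplex ℝ m :=
  ⟨fun h j => ⟨fun i => h.1 i j, h.2 j⟩,
    fun h => ⟨fun i j => (h j).1 i, fun j => (h j).2⟩⟩

lemma columnVec_mul_mem_convexHull [Fintype m] [Fintype p] (M : Matrix (Fin d) m ℝ)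
    {A : Matrix m p ℝ} (hA : ColStoch A) (j : p) :
    columnVec (M * A) j ∈ convexHull ℝ (cols M) :=
  mem_convexHull_range_iff_exists_stdSimplex.2
    ⟨_, colStoch_iff_forall_mem_stdSimplex.1 hA j, (columnVec_mul M A j).symm⟩

lemma exists_colStoch_columnVec_mul_eq [Fintype m] [Fintype p] (M : Matrix (Fin d) m ℝ)
    {z : p → EuclideanSpace ℝ (Fin d)} (hz : ∀ j, z j ∈ convexHull ℝ (cols M)) :
    ∃ A : Matrix m p ℝ, ColStoch A ∧ ∀ j, columnVec (M * A) j = z j := by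
  choose w hw hwz using fun j => mem_convexHull_range_iff_exists_stdSimplex.1 (hz j)
  exact ⟨Matrix.of fun i j => w j i, colStoch_iff_forall_mem_stdSimplex.2 hw,
    fun j => (columnVec_mul M _ j).trans (hwz j)⟩

lemma norm_columnVec_mul_le [Fintype m] [Fintype p] (M : Matrix (Fin d) m ℝ) {B : Matrix m p ℝ}
    (hB : ColStoch B) {c : ℝ} (hM : ∀ i, ‖columnVec M i‖ ≤ c) (j : p) :
    ‖columnVec (M * B) j‖ ≤ c := by
  have hball : convexHull ℝ (cols M) ⊆ closedBall 0 c :=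
    (convex_closedBall 0 c).convexHull_subset_iff.2 <| by
      rw [cols_eq_range_columnVec]
      rintro _ ⟨i, rfl⟩
      simpa using hM i
  simpa using hball (columnVec_mul_mem_convexHull M hB j)

lemma isCompact_convexHull_cols [Fintype n] (M : Matrix (Fin d) n ℝ) :
    IsCompact (convexHull ℝ (cols M)) :=
  (finite_range _).isCompact_convexHull (𝕜 := ℝ)

lemma exists_colStoch_dist_columnVec_le [Fintype m] [Fintype n] [Fintype p] [Nonempty m]
    [Nonempty n] (Y : Matrix (Fin d) m ℝ) (Z : Matrix (Fin d) n ℝ) {P : Matrix (Fin d) p ℝ}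
    (hP : ∀ j, columnVec P j ∈ convexHull ℝ (cols Y)) :
    ∃ A : Matrix n p ℝ, ColStoch A ∧ ∀ j, dist (columnVec P j) (columnVec (Z * A) j) ≤
      hausdorffDist (convexHull ℝ (cols Z)) (convexHull ℝ (cols Y)) := by
  have hY : (convexHull ℝ (cols Y)).Nonempty := convexHull_nonempty_iff.2 (range_nonempty _)
  have hZ : (convexHull ℝ (cols Z)).Nonempty := convexHull_nonempty_iff.2 (range_nonempty _)
  have hfin : hausdorffEDist (convexHull ℝ (cols Y)) (convexHull ℝ (cols Z)) ≠ ⊤ :=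
    hausdorffEDist_ne_top_of_nonempty_of_bounded hY hZ
      (isCompact_convexHull_cols Y).isBounded (isCompact_convexHull_cols Z).isBounded
  choose z hz hdist using fun j =>
    exists_mem_dist_le_hausdorffDist (hP j) (isCompact_convexHull_cols Z) hZ hfin
  obtain ⟨A, hA, hAz⟩ := exists_colStoch_columnVec_mul_eq Z hz
  exact ⟨A, hA, fun j => by rw [hAz, hausdorffDist_comm]; exact hdist j⟩

end Columns

section Frobenius

variable {d : ℕ} {m n : Type*} [Fintype m] [Fintype n]

attribute [local instance] Matrix.frobeniusNormedAddCommGroup in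
lemma frob_eq_norm (M : Matrix m n ℝ) : frob M = ‖M‖ := by
  rw [frob, Matrix.frobenius_norm_def, Real.sqrt_eq_rpow]
  simp [Real.norm_eq_abs, sq_abs]

attribute [local instance] Matrix.frobeniusNormedAddCommGroup in
lemma frob_add_le (M M' : Matrix m n ℝ) : frob (M + M') ≤ frob M + frob M' := by
  simpa only [frob_eq_norm] using norm_add_le M M'

lemma frob_eq_sqrt_sum_norm_columnVec_sq (M : Matrix (Fin d) n ℝ) :
    frob M = √(∑ j, ‖columnVec M j‖ ^ 2) := by
  rw [frob, Finset.sum_comm]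
  congr 1
  refine Finset.sum_congr rfl fun j _ => ?_
  rw [EuclideanSpace.norm_eq, Real.sq_sqrt (by positivity)]
  simp [columnVec, Real.norm_eq_abs, sq_abs]

lemma frob_le_sqrt_card_mul (M : Matrix (Fin d) n ℝ) {c : ℝ} (hc : 0 ≤ c)
    (hM : ∀ j, ‖columnVec M j‖ ≤ c) : frob M ≤ √(Fintype.card n) * c := by
  calc frob M ≤ √(∑ _j : n, c ^ 2) := by
        rw [frob_eq_sqrt_sum_norm_columnVec_sq]
        gcongr with j
        exact hM j
    _ = √(Fintype.card n) * c := by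
        rw [Finset.sum_const, Finset.card_univ, nsmul_eq_mul, Real.sqrt_mul (by positivity),
          Real.sqrt_sq hc]

lemma frob_sub_mul_le (X : Matrix (Fin d) n ℝ) (P Q : Matrix (Fin d) m ℝ) {B : Matrix m n ℝ}
    (hB : ColStoch B) {c : ℝ} (hc : 0 ≤ c)
    (hPQ : ∀ j, dist (columnVec P j) (columnVec Q j) ≤ c) :
    frob (X - Q * B) ≤ frob (X - P * B) + √(Fintype.card n) * c := by
  have hsplit : X - Q * B = (X - P * B) + (P - Q) * B := by rw [Matrix.sub_mul]; abel
  rw [hsplit]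
  refine (frob_add_le _ _).trans (add_le_add le_rfl ?_)
  refine frob_le_sqrt_card_mul _ hc (norm_columnVec_mul_le _ hB fun j => ?_)
  rw [columnVec_sub, ← dist_eq_norm]
  exact hPQ j

end Frobenius

theorem aa_approx_hull_general {d N k : ℕ} (ε : ℝ)
    (X : Matrix (Fin d) (Fin N) ℝ) (T : Finset (Fin N)) (hT : T.Nonempty)
    (XT : Matrix (Fin d) {i // i ∈ T} ℝ)
    (hopt : ∃ A : Matrix (Fin N) (Fin k) ℝ, ∃ B : Matrix (Fin k) (Fin N) ℝ,
      ColStoch A ∧ ColStoch B ∧ (1 / Real.sqrt N) * frob (X - X * A * B) = opt k X)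
    (hH : hausdorffDist (convexHull ℝ (cols XT)) (convexHull ℝ (cols X)) ≤ opt k X * ε) :
    sInf {c | ∃ A : Matrix {i // i ∈ T} (Fin k) ℝ, ∃ B : Matrix (Fin k) (Fin N) ℝ,
        ColStoch A ∧ ColStoch B ∧ c = (1 / Real.sqrt N) * frob (X - XT * A * B)}
      ≤ (1 + ε) * opt k X := by
  obtain ⟨A, B, hA, hB, hval⟩ := hopt
  obtain ⟨t, ht⟩ := hT
  have : Nonempty (Fin N) := ⟨t⟩
  have : Nonempty {i // i ∈ T} := ⟨⟨t, ht⟩⟩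
  set h := hausdorffDist (convexHull ℝ (cols XT)) (convexHull ℝ (cols X))
  obtain ⟨A', hA', hdist⟩ :=
    exists_colStoch_dist_columnVec_le X XT (columnVec_mul_mem_convexHull X hA)
  have hfrob : frob (X - XT * A' * B) ≤ frob (X - X * A * B) + √(N : ℝ) * h := by
    simpa only [Fintype.card_fin] using
      frob_sub_mul_le X (X * A) (XT * A') hB hausdorffDist_nonneg hdist
  have hN : 0 < √(N : ℝ) := Real.sqrt_pos.2 (Nat.cast_pos.2 t.pos)
  refine csInf_le_of_le ⟨0, ?_⟩ ⟨A', B, hA', hB, rfl⟩ ?_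
  · rintro _ ⟨_, _, _, _, rfl⟩
    exact mul_nonneg (by positivity) (Real.sqrt_nonneg _)
  calc 1 / √(N : ℝ) * frob (X - XT * A' * B)
      ≤ 1 / √(N : ℝ) * (frob (X - X * A * B) + √(N : ℝ) * h) := by gcongr
    _ = opt k X + h := by
        rw [mul_add, hval]
        field_simp
    _ ≤ (1 + ε) * opt k X := by linarith

/-- If the convex hull of the columns indexed by `T` is within Hausdorff distance
`opt(X)·ε` of the convex hull of all columns, then archetypal analysis restricted to
`X_T` is a `(1+ε)`-approximation in objective value. -/
theorem aa_approx_hull {d N k : ℕ} (ε : ℝ) (hε : 0 < ε)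
    (X : Matrix (Fin d) (Fin N) ℝ) (T : Finset (Fin N)) (hT : T.Nonempty)
    (XT : Matrix (Fin d) {i // i ∈ T} ℝ) (hXT : ∀ a (i : {i // i ∈ T}), XT a i = X a i.1)
    (hopt : ∃ A : Matrix (Fin N) (Fin k) ℝ, ∃ B : Matrix (Fin k) (Fin N) ℝ,
      ColStoch A ∧ ColStoch B ∧ (1 / Real.sqrt N) * frob (X - X * A * B) = opt k X)
    (hH : hausdorffDist (convexHull ℝ (cols XT)) (convexHull ℝ (cols X)) ≤ opt k X * ε) :
    sInf {c | ∃ A : Matrix {i // i ∈ T} (Fin k) ℝ, ∃ B : Matrix (Fin k) (Fin N) ℝ,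
        ColStoch A ∧ ColStoch B ∧ c = (1 / Real.sqrt N) * frob (X - XT * A * B)}
      ≤ (1 + ε) * opt k X :=
  aa_approx_hull_general ε X T hT XT hopt hH
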